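/- arXiv:2110.10294 — 4 statements merged into one kernel-verified Lean document; each statement's English description precedes it below -/
import Mathlib

section
/- For any integer n ≥ 2 and real numbers x_1, ..., x_n, the difference between the maximum of the x_i and their average is at least (1/(2n(n-1))) times the sum over all pairs i < j of |x_i - x_j|. -/
/-!
With `M` the maximum, `|x i - x j| ≤ (M - x i) + (M - x j)`. Summed over all ordered pairs
`i ≠ j` (which include the pairs `i < j`) the right-hand side is `2 (n - 1) (n M - ∑ x)`,
that is `2 n (n - 1)` times the maximum minus the mean.
-/

open Finset

namespace Finset

variable {ι R : Type*} [DecidableEq ι]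

theorem sum_offDiag_fst [CommRing R] (s : Finset ι) (f : ι → R) :
    ∑ p ∈ s.offDiag, f p.1 = ((#s : R) - 1) * ∑ i ∈ s, f i := by
  have hsplit := sum_union (f := fun p : ι × ι => f p.1) (disjoint_diag_offDiag s)
  rw [diag_union_offDiag, sum_product, diag, sum_map] at hsplit
  simp only [Function.Embedding.coeFn_mk, Function.diag, sum_const, nsmul_eq_mul] at hsplit
  rw [← mul_sum] at hsplit
  linear_combination -hsplit

theorem sum_offDiag_snd [CommRing R] (s : Finset ι) (f : ι → R) :
    ∑ p ∈ s.offDiag, f p.2 = ((#s : R) - 1) * ∑ i ∈ s, f i := by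
  rw [← sum_offDiag_fst]
  exact sum_equiv (Equiv.prodComm ι ι) (by simp [and_left_comm, eq_comm]) fun _ _ => rfl

theorem sum_offDiag_abs_sub_le [CommRing R] [LinearOrder R] [IsStrictOrderedRing R]
    (s : Finset ι) (x : ι → R) {M : R} (hM : ∀ i ∈ s, x i ≤ M) :
    ∑ p ∈ s.offDiag, |x p.1 - x p.2| ≤ 2 * ((#s : R) - 1) * ∑ i ∈ s, (M - x i) :=
  calc ∑ p ∈ s.offDiag, |x p.1 - x p.2|
      ≤ ∑ p ∈ s.offDiag, ((M - x p.1) + (M - x p.2)) := by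
        refine sum_le_sum fun p hp => ?_
        obtain ⟨h₁, h₂, -⟩ := mem_offDiag.1 hp
        have := hM _ h₁
        have := hM _ h₂
        exact abs_sub_le_iff.2 ⟨by linarith, by linarith⟩
    _ = 2 * ((#s : R) - 1) * ∑ i ∈ s, (M - x i) := by
        rw [sum_add_distrib, sum_offDiag_fst s (fun i => M - x i),
          sum_offDiag_snd s (fun i => M - x i)]
        ring

end Finset

theorem max_sub_mean_ge (n : ℕ) (hn : 2 ≤ n) (x : Fin n → ℝ) :
    (Finset.univ.sup' (Finset.univ_nonempty_iff.2 ⟨⟨0, by omega⟩⟩) x)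
      - (∑ i, x i) / n
      ≥ (1 / (2 * n * (n - 1))) *
        ∑ p ∈ (Finset.univ : Finset (Fin n × Fin n)).filter (fun p => p.1 < p.2),
          |x p.1 - x p.2| := by
  set M := Finset.univ.sup' (Finset.univ_nonempty_iff.2 ⟨⟨0, by omega⟩⟩) x
  have hlt_le_offDiag :
      ∑ p ∈ (univ : Finset (Fin n × Fin n)).filter (fun p => p.1 < p.2), |x p.1 - x p.2|
        ≤ ∑ p ∈ (univ : Finset (Fin n)).offDiag, |x p.1 - x p.2| :=
    sum_le_sum_of_subset_of_nonneg
      (fun p hp => mem_offDiag.2 ⟨mem_univ _, mem_univ _, (mem_filter.1 hp).2.ne⟩)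
      fun _ _ _ => abs_nonneg _
  have hoffDiag := sum_offDiag_abs_sub_le (M := M) univ x fun i _ => le_sup' x (mem_univ i)
  rw [card_univ, Fintype.card_fin, sum_sub_distrib, sum_const, card_univ, Fintype.card_fin,
    nsmul_eq_mul] at hoffDiag
  have hn' : (2 : ℝ) ≤ n := by exact_mod_cast hn
  rw [ge_iff_le, one_div_mul_eq_div, div_le_iff₀ (by nlinarith)]
  calc _ ≤ 2 * ((n : ℝ) - 1) * (n * M - ∑ i, x i) := hlt_le_offDiag.trans hoffDiag
    _ = (M - (∑ i, x i) / n) * (2 * n * (n - 1)) := by field_simp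
end

section
/- Let t_0 ≥ t_1 ≥ t_2 ≥ ... be a nonincreasing sequence of real-valued random variables with t_0 = T (a constant), and suppose that for each k, E[e^{-(t_k - t_{k+1})} | F_k] ≤ (2dk+1)/(2dk+2) for a filtration {F_k} to which the sequence is adapted. Then E[e^{t_k - T}] ≤ ∏_{j=0}^{k-1} (2dj+1)/(2dj+2), and consequently t_k → -∞ almost surely. -/
/-!
Conditioning on `ℱ k` and pulling out the `ℱ k`-measurable factor `exp (t k - T)` gives
`E[exp (t (k+1) - T)] ≤ c k * E[exp (t k - T)]` with `c k = (2dk+1)/(2dk+2)`, hence the product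
bound. As `∑ (1 - c k) = ∑ 1/(2dk+2)` diverges, the product tends to `0`. Then `exp (t k)`
decreases to a nonnegative limit of expectation `0`, which therefore vanishes almost surely.
-/

open MeasureTheory Filter Real Finset Topology

lemma le_prod_range_of_le_mul {R : Type*} [CommSemiring R] [PartialOrder R] [IsOrderedRing R]
    {a c : ℕ → R} (hc : ∀ k, 0 ≤ c k) (h0 : a 0 ≤ 1) (hstep : ∀ k, a (k + 1) ≤ c k * a k) :
    ∀ k, a k ≤ ∏ j ∈ range k, c j
  | 0 => by simpa using h0
  | k + 1 => by
    rw [prod_range_succ, mul_comm]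
    exact (hstep k).trans (mul_le_mul_of_nonneg_left (le_prod_range_of_le_mul hc h0 hstep k) (hc k))

lemma tendsto_prod_range_one_sub_nhds_zero {a : ℕ → ℝ} (ha : ∀ j, a j ≤ 1)
    (hsum : Tendsto (fun k => ∑ j ∈ range k, a j) atTop atTop) :
    Tendsto (fun k => ∏ j ∈ range k, (1 - a j)) atTop (𝓝 0) := by
  have hle : ∀ k, ∏ j ∈ range k, (1 - a j) ≤ exp (-∑ j ∈ range k, a j) := fun k => by
    rw [← sum_neg_distrib, exp_sum]
    exact prod_le_prod (fun j _ => sub_nonneg.2 (ha j)) fun j _ => one_sub_le_exp_neg (a j)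
  exact squeeze_zero (fun k => prod_nonneg fun j _ => sub_nonneg.2 (ha j)) hle
    (tendsto_exp_atBot.comp (tendsto_neg_atTop_atBot.comp hsum))

lemma tendsto_sum_range_one_div_mul_add_atTop {a b : ℝ} (ha : 0 ≤ a) (hb : 0 < b) :
    Tendsto (fun k => ∑ j ∈ range k, 1 / (a * j + b)) atTop atTop := by
  have hharmonic := tendsto_sum_range_one_div_nat_succ_atTop.const_mul_atTop
    (inv_pos.2 (add_pos_of_nonneg_of_pos ha hb))
  refine tendsto_atTop_mono (fun k => ?_) hharmonic
  rw [mul_sum]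
  refine sum_le_sum fun j _ => ?_
  have hj : (0 : ℝ) ≤ j := j.cast_nonneg
  rw [← div_eq_inv_mul, div_div]
  exact one_div_le_one_div_of_le (by positivity) (by nlinarith)

lemma tendsto_prod_range_two_mul_add_one_div_nhds_zero (d : ℕ) :
    Tendsto (fun k => ∏ j ∈ range k, ((2 * d * j + 1 : ℝ) / (2 * d * j + 2))) atTop (𝓝 0) := by
  convert tendsto_prod_range_one_sub_nhds_zero (fun j => ?_)
    (tendsto_sum_range_one_div_mul_add_atTop (by positivity : (0 : ℝ) ≤ 2 * d) two_pos) using 3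
  · field_simp
    ring
  · exact div_le_one_of_le₀ (one_le_two.trans (le_add_of_nonneg_left (by positivity)))
      (by positivity)

section

variable {Ω : Type*}

lemma integrable_exp_of_le [MeasurableSpace Ω] {μ : Measure Ω} [IsFiniteMeasure μ]
    {X : Ω → ℝ} (hX : AEStronglyMeasurable X μ) {C : ℝ} (hC : ∀ᵐ ω ∂μ, X ω ≤ C) :
    Integrable (fun ω => exp (X ω)) μ :=
  .of_bound (continuous_exp.comp_aestronglyMeasurable hX) (exp C) <| by
    filter_upwards [hC] with ω hω
    rw [norm_of_nonneg (exp_nonneg _)]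
    exact exp_le_exp.2 hω

lemma integral_mul_le_of_condExp_le {m m0 : MeasurableSpace Ω} {μ : Measure Ω}
    (hm : m ≤ m0) [SigmaFinite (μ.trim hm)] {f g : Ω → ℝ} {c : ℝ}
    (hf : AEStronglyMeasurable[m] f μ) (hf0 : 0 ≤ᵐ[μ] f) (hfi : Integrable f μ)
    (hg : Integrable g μ) (hfg : Integrable (f * g) μ) (hcond : ∀ᵐ ω ∂μ, μ[g | m] ω ≤ c) :
    ∫ ω, f ω * g ω ∂μ ≤ c * ∫ ω, f ω ∂μ := by
  have hpull := condExp_mul_of_aestronglyMeasurable_left hf hfg hg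
  calc ∫ ω, f ω * g ω ∂μ = ∫ ω, (f * μ[g | m]) ω ∂μ :=
        (integral_condExp hm).symm.trans (integral_congr_ae hpull)
    _ ≤ ∫ ω, f ω * c ∂μ := by
        refine integral_mono_ae (integrable_condExp.congr hpull) (hfi.mul_const c) ?_
        filter_upwards [hcond, hf0] with ω hω hfω
        exact mul_le_mul_of_nonneg_left hω hfω
    _ = c * ∫ ω, f ω ∂μ := by rw [integral_mul_const, mul_comm]

lemma integral_exp_sub_le_mul_of_condExp_le {m m0 : MeasurableSpace Ω}
    {μ : Measure Ω} [IsFiniteMeasure μ] (hm : m ≤ m0) {X Y : Ω → ℝ} {T c : ℝ}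
    (hX : Measurable[m] X) (hY : Measurable Y) (hYX : ∀ ω, Y ω ≤ X ω) (hXT : ∀ ω, X ω ≤ T)
    (hcond : ∀ᵐ ω ∂μ, μ[fun ω => exp (-(X ω - Y ω)) | m] ω ≤ c) :
    ∫ ω, exp (Y ω - T) ∂μ ≤ c * ∫ ω, exp (X ω - T) ∂μ := by
  have hsplit : ∀ ω, exp (Y ω - T) = exp (X ω - T) * exp (-(X ω - Y ω)) :=
    fun ω => by rw [← exp_add]; ring_nf
  have hYT : ∀ ω, Y ω - T ≤ 0 := fun ω => by linarith [hYX ω, hXT ω]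
  simp_rw [hsplit]
  exact integral_mul_le_of_condExp_le hm
    (hX.sub_const T).exp.stronglyMeasurable.aestronglyMeasurable
    (ae_of_all _ fun ω => (exp_pos _).le)
    (integrable_exp_of_le ((hX.mono hm le_rfl).sub_const T).aestronglyMeasurable
      (ae_of_all _ fun ω => sub_nonpos.2 (hXT ω)))
    (integrable_exp_of_le ((hX.mono hm le_rfl).sub hY).neg.aestronglyMeasurable
      (ae_of_all _ fun ω => neg_nonpos.2 (sub_nonneg.2 (hYX ω))))
    ((integrable_exp_of_le (hY.sub_const T).aestronglyMeasurable (ae_of_all _ hYT)).congr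
      (ae_of_all _ hsplit)) hcond

lemma ae_tendsto_atBot_of_integral_exp_tendsto_zero [MeasurableSpace Ω]
    {μ : Measure Ω} {X : ℕ → Ω → ℝ} (hanti : ∀ ω, Antitone fun k => X k ω)
    (hint : ∀ k, Integrable (fun ω => exp (X k ω)) μ)
    (hlim : Tendsto (fun k => ∫ ω, exp (X k ω) ∂μ) atTop (𝓝 0)) :
    ∀ᵐ ω ∂μ, Tendsto (fun k => X k ω) atTop atBot := by
  set L : Ω → ℝ := fun ω => ⨅ k, exp (X k ω)
  have hbdd : ∀ ω, BddBelow (Set.range fun k => exp (X k ω)) :=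
    fun ω => ⟨0, Set.forall_mem_range.2 fun k => (exp_pos _).le⟩
  have hL : ∀ ω, Tendsto (fun k => exp (X k ω)) atTop (𝓝 (L ω)) :=
    fun ω => tendsto_atTop_ciInf (fun _ _ hij => exp_le_exp.2 (hanti ω hij)) (hbdd ω)
  have hL0 : 0 ≤ L := fun ω => le_ciInf fun k => (exp_pos _).le
  have hLi : Integrable L μ := by
    refine (hint 0).mono' (aestronglyMeasurable_of_tendsto_ae atTop (fun k => (hint k).1)
      (ae_of_all _ hL)) (ae_of_all _ fun ω => ?_)
    rw [norm_of_nonneg (hL0 ω)]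
    exact ciInf_le (hbdd ω) 0
  have hLint : ∫ ω, L ω ∂μ = 0 := by
    refine le_antisymm (ge_of_tendsto hlim (Eventually.of_forall fun k => ?_))
      (integral_nonneg hL0)
    exact integral_mono hLi (hint k) fun ω => ciInf_le (hbdd ω) k
  filter_upwards [(integral_eq_zero_iff_of_nonneg hL0 hLi).1 hLint] with ω hω
  exact tendsto_exp_comp_nhds_zero.1 (by simpa only [hω, Pi.zero_apply] using hL ω)

end

theorem decreasing_times_exp_bound_general (d : ℕ)
    {Θ : Type*} [m0 : MeasurableSpace Θ] (P : Measure Θ) [IsProbabilityMeasure P]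
    (ℱ : Filtration ℕ m0) (T : ℝ) (t : ℕ → Θ → ℝ)
    (h0 : ∀ θ, t 0 θ = T)
    (hanti : ∀ k θ, t (k + 1) θ ≤ t k θ)
    (hadapted : Adapted ℱ t)
    (hcond : ∀ k, ∀ᵐ θ ∂P,
      (P[(fun θ => exp (-(t k θ - t (k + 1) θ))) | ℱ k]) θ
        ≤ (2 * d * k + 1 : ℝ) / (2 * d * k + 2)) :
    (∀ k, ∫ θ, exp (t k θ - T) ∂P
        ≤ ∏ j ∈ Finset.range k, ((2 * d * j + 1 : ℝ) / (2 * d * j + 2))) ∧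
    (∀ᵐ θ ∂P, Tendsto (fun k => t k θ) atTop atBot) := by
  have ht_anti : ∀ θ, Antitone fun k => t k θ := fun θ => antitone_nat_of_succ_le (hanti · θ)
  have ht_le : ∀ k θ, t k θ ≤ T := fun k θ => (ht_anti θ (Nat.zero_le k)).trans_eq (h0 θ)
  have hmeas : ∀ k, Measurable (t k) := fun k => (hadapted k).mono (ℱ.le k) le_rfl
  have hbound : ∀ k, ∫ θ, exp (t k θ - T) ∂P
      ≤ ∏ j ∈ range k, ((2 * d * j + 1 : ℝ) / (2 * d * j + 2)) :=
    le_prod_range_of_le_mul (fun k => by positivity) (by simp [h0]) fun k =>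
      integral_exp_sub_le_mul_of_condExp_le (ℱ.le k) (hadapted k) (hmeas (k + 1)) (hanti k)
        (ht_le k) (hcond k)
  refine ⟨hbound, ?_⟩
  have hint : ∀ k, Integrable (fun θ => exp (t k θ - T)) P := fun k =>
    integrable_exp_of_le ((hmeas k).sub_const T).aestronglyMeasurable
      (ae_of_all _ fun θ => sub_nonpos.2 (ht_le k θ))
  have hexp_lim := squeeze_zero (fun k => integral_nonneg fun θ => (exp_pos (t k θ - T)).le)
    hbound (tendsto_prod_range_two_mul_add_one_div_nhds_zero d)
  filter_upwards [ae_tendsto_atBot_of_integral_exp_tendsto_zero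
    (fun θ k l hkl => sub_le_sub_right (ht_anti θ hkl) T) hint hexp_lim] with θ hθ
  simpa using tendsto_atBot_add_const_right _ T hθ

theorem decreasing_times_exp_bound (d : ℕ) (hd : 1 ≤ d)
    {Θ : Type*} [m0 : MeasurableSpace Θ] (P : Measure Θ) [IsProbabilityMeasure P]
    (ℱ : Filtration ℕ m0) (T : ℝ) (t : ℕ → Θ → ℝ)
    (h0 : ∀ θ, t 0 θ = T)
    (hanti : ∀ k θ, t (k + 1) θ ≤ t k θ)
    (hadapted : Adapted ℱ t)
    (hcond : ∀ k, ∀ᵐ θ ∂P,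
      (P[(fun θ => exp (-(t k θ - t (k + 1) θ))) | ℱ k]) θ
        ≤ (2 * d * k + 1 : ℝ) / (2 * d * k + 2)) :
    (∀ k, ∫ θ, exp (t k θ - T) ∂P
        ≤ ∏ j ∈ Finset.range k, ((2 * d * j + 1 : ℝ) / (2 * d * j + 2))) ∧
    (∀ᵐ θ ∂P, Tendsto (fun k => t k θ) atTop atBot) :=
  decreasing_times_exp_bound_general d (m0 := m0) P ℱ T t h0 hanti hadapted hcond
end

section
/- Let α, β : [0,∞) → ℝ be monotone nondecreasing functions, bounded on every finite interval, with α(0) = 0, and suppose that for all t, δ ≥ 0, α(t+δ) - α(t) ≥ δ e^{-cδ} (β(t) - α(t)) for some constant c > 0. Then for every t ≥ 0, α(t) ≥ ∫_0^t (β(s) - α(s)) ds. -/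
/-! On the uniform partition `sᵢ = i h`, `h = t / n`, of `[0, t]` the hypothesis gives
`α (sᵢ₊₁) - α sᵢ ≥ h e^{-ch} (β sᵢ - α sᵢ)`, so telescoping yields
`α t ≥ e^{-ch} ∑ᵢ h (β sᵢ - α sᵢ)`. By monotonicity the left Riemann sum of `α` is at most `∫ α`
and that of `β` is at least `∫ β - h (β t - β 0)`, hence
`α t ≥ e^{-ch} (∫ (β - α) - h (β t - β 0))`; let `n → ∞`. -/

open MeasureTheory Real Finset Set Filter Topology

section UniformPartition

variable {f g : ℝ → ℝ} {a b : ℝ} {n : ℕ}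

-- Rescaling `[a, b]` to `[0, n]` reduces uniform Riemann sums to the unit-step comparisons
-- `MonotoneOn.sum_le_integral` and `MonotoneOn.integral_le_sum`.
theorem MonotoneOn.comp_uniformPartition (hf : MonotoneOn f (Icc a b)) (hab : a ≤ b)
    (hn : n ≠ 0) : MonotoneOn (fun x ↦ f (a + (b - a) / n * x)) (Icc 0 (0 + n)) := by
  have hh : 0 ≤ (b - a) / n := div_nonneg (sub_nonneg.2 hab) n.cast_nonneg
  have hb : (b - a) / n * n = b - a := div_mul_cancel₀ _ (Nat.cast_ne_zero.2 hn)
  refine hf.comp (fun x _ y _ hxy ↦ by gcongr) fun x hx ↦ ?_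
  rw [zero_add] at hx
  exact ⟨by nlinarith [hx.1], by nlinarith [hx.2]⟩

theorem integral_eq_mul_integral_uniformPartition (hn : n ≠ 0) :
    ∫ x in a..b, f x = (b - a) / n * ∫ x in 0..0 + n, f (a + (b - a) / n * x) := by
  rw [← smul_eq_mul, intervalIntegral.smul_integral_comp_add_mul]
  congr 1 <;> field_simp <;> ring

theorem MonotoneOn.sum_mul_le_integral (hf : MonotoneOn f (Icc a b)) (hab : a ≤ b)
    (hn : n ≠ 0) :
    ∑ i ∈ range n, (b - a) / n * f (a + (b - a) / n * i) ≤ ∫ x in a..b, f x := by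
  have hh : 0 ≤ (b - a) / n := div_nonneg (sub_nonneg.2 hab) n.cast_nonneg
  rw [integral_eq_mul_integral_uniformPartition hn, ← Finset.mul_sum]
  gcongr
  simpa using (hf.comp_uniformPartition hab hn).sum_le_integral

theorem MonotoneOn.integral_le_sum_mul (hf : MonotoneOn f (Icc a b)) (hab : a ≤ b)
    (hn : n ≠ 0) :
    ∫ x in a..b, f x ≤ ∑ i ∈ range n, (b - a) / n * f (a + (b - a) / n * (i + 1)) := by
  have hh : 0 ≤ (b - a) / n := div_nonneg (sub_nonneg.2 hab) n.cast_nonneg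
  rw [integral_eq_mul_integral_uniformPartition hn, ← Finset.mul_sum]
  gcongr
  simpa using (hf.comp_uniformPartition hab hn).integral_le_sum

theorem MonotoneOn.integral_le_sum_mul_add (hf : MonotoneOn f (Icc a b)) (hab : a ≤ b)
    (hn : n ≠ 0) :
    ∫ x in a..b, f x ≤
      ∑ i ∈ range n, (b - a) / n * f (a + (b - a) / n * i) + (b - a) / n * (f b - f a) := by
  have hb : a + (b - a) / n * n = b := by field_simp; ring
  have htel := Finset.sum_range_sub (fun i : ℕ ↦ (b - a) / n * f (a + (b - a) / n * i)) n
  simp only [Nat.cast_succ, Nat.cast_zero, mul_zero, add_zero] at htel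
  rw [hb, Finset.sum_sub_distrib] at htel
  linarith [hf.integral_le_sum_mul hab hn]

theorem integral_sub_sub_le_sum_mul_sub (hf : MonotoneOn f (Icc a b))
    (hg : MonotoneOn g (Icc a b)) (hab : a ≤ b) (hn : n ≠ 0) :
    (∫ x in a..b, (f x - g x)) - (b - a) / n * (f b - f a) ≤
      ∑ i ∈ range n, (b - a) / n * (f (a + (b - a) / n * i) - g (a + (b - a) / n * i)) := by
  have hsplit := intervalIntegral.integral_sub (μ := volume)
    (hf.mono (uIcc_of_le hab).le).intervalIntegrable
    (hg.mono (uIcc_of_le hab).le).intervalIntegrable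
  simp only [mul_sub, Finset.sum_sub_distrib]
  linarith [hf.integral_le_sum_mul_add hab hn, hg.sum_mul_le_integral hab hn]

end UniformPartition

theorem mul_integral_sub_sub_le_sub_of_increment {α β : ℝ → ℝ} {a b w : ℝ} {n : ℕ}
    (hα : MonotoneOn α (Icc a b)) (hβ : MonotoneOn β (Icc a b)) (hab : a ≤ b) (hn : n ≠ 0)
    (hw : 0 ≤ w)
    (hinc : ∀ i < n, (b - a) / n * w * (β (a + (b - a) / n * i) - α (a + (b - a) / n * i)) ≤
      α (a + (b - a) / n * i + (b - a) / n) - α (a + (b - a) / n * i)) :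
    w * ((∫ x in a..b, (β x - α x)) - (b - a) / n * (β b - β a)) ≤ α b - α a := by
  set h := (b - a) / n with hh
  have hb : a + h * n = b := by rw [hh]; field_simp; ring
  calc w * ((∫ x in a..b, (β x - α x)) - h * (β b - β a))
      ≤ w * ∑ i ∈ range n, h * (β (a + h * i) - α (a + h * i)) := by
        gcongr; exact integral_sub_sub_le_sum_mul_sub hβ hα hab hn
    _ ≤ ∑ i ∈ range n, (α (a + h * ↑(i + 1)) - α (a + h * i)) := by
        rw [Finset.mul_sum]
        refine Finset.sum_le_sum fun i hi ↦ ?_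
        rw [Nat.cast_succ, mul_add_one, ← add_assoc]
        linarith [hinc i (Finset.mem_range.1 hi)]
    _ = α b - α a := by
        rw [Finset.sum_range_sub (fun i : ℕ ↦ α (a + h * i)), hb]; simp

theorem alpha_ge_integral_beta_sub_alpha_general (c : ℝ) (α β : ℝ → ℝ)
    (hαmono : ∀ s t : ℝ, 0 ≤ s → s ≤ t → α s ≤ α t)
    (hβmono : ∀ s t : ℝ, 0 ≤ s → s ≤ t → β s ≤ β t)
    (hα0 : α 0 = 0)
    (hkey : ∀ t δ : ℝ, 0 ≤ t → 0 ≤ δ →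
      α (t + δ) - α t ≥ δ * exp (-c * δ) * (β t - α t)) :
    ∀ t : ℝ, 0 ≤ t → α t ≥ ∫ s in (0:ℝ)..t, (β s - α s) := by
  intro t ht
  set I := ∫ s in (0:ℝ)..t, (β s - α s)
  have hα : MonotoneOn α (Icc 0 t) := fun x hx y _ hxy ↦ hαmono x y hx.1 hxy
  have hβ : MonotoneOn β (Icc 0 t) := fun x hx y _ hxy ↦ hβmono x y hx.1 hxy
  have hbound : ∀ n : ℕ, n ≠ 0 → exp (-c * (t / n)) * (I - t / n * (β t - β 0)) ≤ α t := by
    intro n hn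
    have hh : 0 ≤ t / n := by positivity
    simpa [hα0] using mul_integral_sub_sub_le_sub_of_increment hα hβ ht hn (exp_pos _).le
      fun i _ ↦ by simpa using hkey (t / n * i) (t / n) (by positivity) hh
  have hlim :
      Tendsto (fun n : ℕ ↦ exp (-c * (t / n)) * (I - t / n * (β t - β 0))) atTop (𝓝 I) := by
    have hφ : Continuous fun h : ℝ ↦ exp (-c * h) * (I - h * (β t - β 0)) := by fun_prop
    exact (hφ.tendsto' 0 I (by simp)).comp (tendsto_const_div_atTop_nhds_zero_nat t)
  exact le_of_tendsto hlim ((eventually_ne_atTop 0).mono hbound)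

theorem alpha_ge_integral_beta_sub_alpha (c : ℝ) (hc : 0 < c) (α β : ℝ → ℝ)
    (hαmono : ∀ s t : ℝ, 0 ≤ s → s ≤ t → α s ≤ α t)
    (hβmono : ∀ s t : ℝ, 0 ≤ s → s ≤ t → β s ≤ β t)
    (hbdd : ∀ T : ℝ, 0 ≤ T → ∃ M : ℝ, ∀ s ∈ Set.Icc 0 T, |α s| ≤ M ∧ |β s| ≤ M)
    (hα0 : α 0 = 0)
    (hkey : ∀ t δ : ℝ, 0 ≤ t → 0 ≤ δ →
      α (t + δ) - α t ≥ δ * exp (-c * δ) * (β t - α t)) :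
    ∀ t : ℝ, 0 ≤ t → α t ≥ ∫ s in (0:ℝ)..t, (β s - α s) :=
  alpha_ge_integral_beta_sub_alpha_general c α β hαmono hβmono hα0 hkey
end

section
/- Let {ν_s}_{s≥0} be a family of probability measures on a Polish space with P*ν_s = ν_{s+T} for fixed T > 0, and for a > 0 let γ_a = ∫_0^∞ a^{-1}e^{-s/a} ν_s ds (exponential mixture). Then for every bounded measurable Φ, ∫Φ d(P*γ_a) − ∫Φ dγ_a → 0 as a → ∞. -/
/-!
Substituting `s ↦ s + T` turns the shifted mixture into `e^{T/a}` times the tail `∫_T^∞` of the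
unshifted one, so the difference is `(e^{T/a} - 1) ∫_T^∞ - ∫_0^T`. The tail weight has mass
`e^{-T/a}` and the density `a⁻¹ e^{-s/a}` is at most `a⁻¹` on `(0, T]`, so each term is at most
`M T / a`.
-/

open MeasureTheory Filter Real Set Topology

theorem setIntegral_Ioi_comp_add_right {E : Type*} [NormedAddCommGroup E] [NormedSpace ℝ E]
    (f : ℝ → E) (c d : ℝ) : ∫ x in Ioi c, f (x + d) = ∫ x in Ioi (c + d), f x := by
  simpa using (measurePreserving_add_right volume d).setIntegral_preimage_emb
    (measurableEmbedding_addRight d) f (Ioi (c + d))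

section ExpWeight

variable {a : ℝ}

theorem exp_neg_div_eq_exp_mul (a s : ℝ) : exp (-s / a) = exp (-a⁻¹ * s) := by
  rw [neg_div, div_eq_inv_mul, neg_mul]

theorem integrableOn_exp_neg_div_Ioi (ha : 0 < a) (c : ℝ) :
    IntegrableOn (fun s => exp (-s / a)) (Ioi c) := by
  simpa only [exp_neg_div_eq_exp_mul] using
    integrableOn_exp_mul_Ioi (neg_neg_of_pos (inv_pos.2 ha)) c

theorem integral_exp_neg_div_Ioi (ha : 0 < a) (c : ℝ) :
    ∫ s in Ioi c, exp (-s / a) = a * exp (-c / a) := by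
  simp only [exp_neg_div_eq_exp_mul]
  rw [integral_exp_mul_Ioi (neg_neg_of_pos (inv_pos.2 ha))]
  field_simp

variable {g : ℝ → ℝ} {M : ℝ}

theorem integrableOn_exp_neg_div_mul_Ioi (hg : Measurable g) (hgM : ∀ s, |g s| ≤ M)
    (ha : 0 < a) (c : ℝ) : IntegrableOn (fun s => a⁻¹ * exp (-s / a) * g s) (Ioi c) :=
  ((integrableOn_exp_neg_div_Ioi ha c).const_mul a⁻¹).mul_bdd hg.aestronglyMeasurable
    (ae_of_all _ hgM)

theorem abs_setIntegral_Ioi_exp_neg_div_mul_le (hgM : ∀ s, |g s| ≤ M) (ha : 0 < a) (c : ℝ) :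
    |∫ s in Ioi c, a⁻¹ * exp (-s / a) * g s| ≤ M * exp (-c / a) := by
  have hbound : ∀ s, ‖a⁻¹ * exp (-s / a) * g s‖ ≤ M * a⁻¹ * exp (-s / a) := fun s => by
    rw [norm_mul, norm_of_nonneg (by positivity), Real.norm_eq_abs]
    exact (mul_le_mul_of_nonneg_left (hgM s) (by positivity)).trans_eq (by ring)
  calc |∫ s in Ioi c, a⁻¹ * exp (-s / a) * g s|
      ≤ ∫ s in Ioi c, M * a⁻¹ * exp (-s / a) :=
        norm_integral_le_of_norm_le ((integrableOn_exp_neg_div_Ioi ha c).const_mul _)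
          (ae_of_all _ hbound)
    _ = M * exp (-c / a) := by
        rw [integral_const_mul, integral_exp_neg_div_Ioi ha]
        field_simp

theorem abs_setIntegral_Ioc_exp_neg_div_mul_le (hgM : ∀ s, |g s| ≤ M) (ha : 0 < a)
    {T : ℝ} (hT : 0 ≤ T) : |∫ s in Ioc 0 T, a⁻¹ * exp (-s / a) * g s| ≤ M * (T / a) := by
  have hbound : ∀ s ∈ Ioc 0 T, ‖a⁻¹ * exp (-s / a) * g s‖ ≤ M * a⁻¹ := fun s hs => by
    have hexp : exp (-s / a) ≤ 1 :=
      exp_le_one_iff.2 (div_nonpos_of_nonpos_of_nonneg (by linarith [hs.1]) ha.le)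
    rw [norm_mul, norm_of_nonneg (by positivity), Real.norm_eq_abs, mul_comm M]
    exact mul_le_mul (mul_le_of_le_one_right (by positivity) hexp) (hgM s) (abs_nonneg _)
      (by positivity)
  calc |∫ s in Ioc 0 T, a⁻¹ * exp (-s / a) * g s|
      ≤ M * a⁻¹ * volume.real (Ioc 0 T) :=
        norm_setIntegral_le_of_norm_le_const measure_Ioc_lt_top hbound
    _ = M * (T / a) := by
        rw [Real.volume_real_Ioc_of_le hT]
        ring

theorem abs_expMixture_shift_sub_le (hg : Measurable g) (hgM : ∀ s, |g s| ≤ M) (ha : 0 < a)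
    {T : ℝ} (hT : 0 ≤ T) :
    |(∫ s in Ioi 0, a⁻¹ * exp (-s / a) * g (s + T)) - ∫ s in Ioi 0, a⁻¹ * exp (-s / a) * g s|
      ≤ 2 * M * (T / a) := by
  set tail : ℝ → ℝ := fun c => ∫ s in Ioi c, a⁻¹ * exp (-s / a) * g s
  set head := ∫ s in Ioc 0 T, a⁻¹ * exp (-s / a) * g s
  have hshift : ∫ s in Ioi 0, a⁻¹ * exp (-s / a) * g (s + T) = exp (T / a) * tail T := by
    have hweight : ∀ s, a⁻¹ * exp (-s / a) * g (s + T)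
        = exp (T / a) * (a⁻¹ * exp (-(s + T) / a) * g (s + T)) := fun s => by
      rw [show exp (-s / a) = exp (T / a) * exp (-(s + T) / a) by rw [← exp_add]; ring_nf]
      ring
    simp_rw [hweight, integral_const_mul, setIntegral_Ioi_comp_add_right
      (fun s => a⁻¹ * exp (-s / a) * g s), zero_add, tail]
  have hsplit : tail 0 = head + tail T := by
    rw [← setIntegral_union (Ioc_disjoint_Ioi le_rfl) measurableSet_Ioi
      ((integrableOn_exp_neg_div_mul_Ioi hg hgM ha 0).mono_set Ioc_subset_Ioi_self)
      (integrableOn_exp_neg_div_mul_Ioi hg hgM ha T), Ioc_union_Ioi_eq_Ioi hT]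
  have htail : (exp (T / a) - 1) * |tail T| ≤ M * (T / a) := by
    have hexp : exp (T / a) * exp (-T / a) = 1 := by rw [← exp_add]; simp [neg_div]
    calc (exp (T / a) - 1) * |tail T| ≤ (exp (T / a) - 1) * (M * exp (-T / a)) :=
          mul_le_mul_of_nonneg_left (abs_setIntegral_Ioi_exp_neg_div_mul_le hgM ha T)
            (sub_nonneg.2 (one_le_exp (by positivity)))
      _ = M * (1 - exp (-(T / a))) := by rw [← neg_div]; linear_combination M * hexp
      _ ≤ M * (T / a) := by
          have := add_one_le_exp (-(T / a))
          have hM : 0 ≤ M := (abs_nonneg _).trans (hgM 0)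
          nlinarith
  calc |(∫ s in Ioi 0, a⁻¹ * exp (-s / a) * g (s + T)) - tail 0|
      = |(exp (T / a) - 1) * tail T - head| := by rw [hshift, hsplit]; ring_nf
    _ ≤ (exp (T / a) - 1) * |tail T| + |head| := by
        refine (abs_sub _ _).trans_eq ?_
        rw [abs_mul, abs_of_nonneg (sub_nonneg.2 (one_le_exp (by positivity)))]
    _ ≤ 2 * M * (T / a) := by
        linarith [abs_setIntegral_Ioc_exp_neg_div_mul_le hgM ha hT (g := g)]

end ExpWeight

theorem exponential_mixture_almost_stationary_general {Ω : Type*} [MeasurableSpace Ω]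
    (ν : ℝ → Measure Ω) (hprob : ∀ s, IsProbabilityMeasure (ν s))
    (T : ℝ) (hT : 0 < T) (Φ : Ω → ℝ)
    (M : ℝ) (hM : ∀ f, |Φ f| ≤ M)
    (hmeas : Measurable fun s => ∫ f, Φ f ∂(ν s)) :
    Tendsto (fun a : ℝ =>
      (∫ s in Set.Ioi (0:ℝ), a⁻¹ * exp (-s / a) * ∫ f, Φ f ∂(ν (s + T)))
        - ∫ s in Set.Ioi (0:ℝ), a⁻¹ * exp (-s / a) * ∫ f, Φ f ∂(ν s))
      atTop (nhds 0) := by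
  have hbounded : ∀ s, |∫ f, Φ f ∂(ν s)| ≤ M := fun s => by
    simpa using norm_integral_le_of_norm_le_const (μ := ν s) (C := M)
      (ae_of_all _ fun f => (norm_eq_abs (Φ f)).trans_le (hM f))
  have hrate : Tendsto (fun a : ℝ => 2 * M * (T / a)) atTop (𝓝 0) := by
    simpa using (tendsto_const_nhds.div_atTop tendsto_id).const_mul (2 * M)
  refine squeeze_zero_norm' ?_ hrate
  filter_upwards [eventually_gt_atTop 0] with a ha
  exact abs_expMixture_shift_sub_le hmeas hbounded ha hT.le

/-- If `P*ν_s = ν_{s+T}` and `γ_a` is the exponential mixture of the `ν_s` with mean `a`,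
then `∫Φ d(P*γ_a) − ∫Φ dγ_a → 0` as `a → ∞` for bounded measurable `Φ`. -/
theorem exponential_mixture_almost_stationary {Ω : Type*} [MeasurableSpace Ω]
    (ν : ℝ → Measure Ω) (hprob : ∀ s, IsProbabilityMeasure (ν s))
    (T : ℝ) (hT : 0 < T) (Φ : Ω → ℝ) (hΦ : Measurable Φ)
    (M : ℝ) (hM : ∀ f, |Φ f| ≤ M)
    (hmeas : Measurable fun s => ∫ f, Φ f ∂(ν s)) :
    Tendsto (fun a : ℝ =>
      (∫ s in Set.Ioi (0:ℝ), a⁻¹ * exp (-s / a) * ∫ f, Φ f ∂(ν (s + T)))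
        - ∫ s in Set.Ioi (0:ℝ), a⁻¹ * exp (-s / a) * ∫ f, Φ f ∂(ν s))
      atTop (nhds 0) :=
  exponential_mixture_almost_stationary_general ν hprob T hT Φ M hM hmeas
end
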